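/- arXiv:2511.07791 — 2 statements merged into one kernel-verified Lean document; each statement's English description precedes it below -/
import Mathlib

section
/- Let 1 < γ < 2 and λ_0 > 0, and set λ_n = λ_0/(n+1)^{γ/p} for n ≥ 0 with p ∈ [1,2). Then for all n ≥ 1, ∑_{l=0}^∞ (λ_l λ_{l+n})^{p/2} ≤ λ_0^p · B(1 − γ/2, γ − 1) · n^{−(γ−1)}, where B denotes the Beta function. -/
open MeasureTheory Set

/-- The Beta function `B(a,b) = Γ(a)Γ(b)/Γ(a+b)`. -/
noncomputable def realBeta (a b : ℝ) : ℝ :=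
  Real.Gamma a * Real.Gamma b / Real.Gamma (a + b)

lemma beta_Ioo (a b : ℝ) (ha : 0 < a) (hb : 0 < b) :
    ∫ u in Ioo (0:ℝ) 1, u ^ (a-1) * (1-u) ^ (b-1) = realBeta a b := by
  have hG : Real.Gamma (a+b) ≠ 0 := (Real.Gamma_pos_of_pos (by linarith)).ne'
  have h := Complex.Gamma_mul_Gamma_eq_betaIntegral (s := (a:ℂ)) (t := (b:ℂ))
    (by simpa using ha) (by simpa using hb)
  have hGc : Complex.Gamma ((a:ℂ)+(b:ℂ)) ≠ 0 := by
    rw [← Complex.ofReal_add, Complex.Gamma_ofReal]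
    exact_mod_cast hG
  have hbeta : Complex.betaIntegral (a:ℂ) (b:ℂ) = ((realBeta a b : ℝ) : ℂ) := by
    have h2 : Complex.betaIntegral (a:ℂ) (b:ℂ)
        = Complex.Gamma a * Complex.Gamma b / Complex.Gamma ((a:ℂ)+(b:ℂ)) := by
      rw [eq_div_iff hGc, mul_comm, ← h]
    rw [h2, ← Complex.ofReal_add, Complex.Gamma_ofReal, Complex.Gamma_ofReal,
      Complex.Gamma_ofReal, ← Complex.ofReal_mul, ← Complex.ofReal_div, realBeta]
  have hre : Complex.betaIntegral (a:ℂ) (b:ℂ)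
      = ((∫ u in (0:ℝ)..1, u ^ (a-1) * (1-u) ^ (b-1) : ℝ) : ℂ) := by
    rw [Complex.betaIntegral, ← intervalIntegral.integral_ofReal]
    apply intervalIntegral.integral_congr
    intro x hx
    rw [uIcc_of_le zero_le_one] at hx
    have h1x : (0:ℝ) ≤ 1 - x := by linarith [hx.2]
    push_cast [Complex.ofReal_cpow hx.1, Complex.ofReal_cpow h1x]
    ring
  have : ((∫ u in (0:ℝ)..1, u ^ (a-1) * (1-u) ^ (b-1) : ℝ) : ℂ) = ((realBeta a b : ℝ) : ℂ) := by
    rw [← hre, hbeta]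
  have h3 := Complex.ofReal_injective this
  rw [← h3, intervalIntegral.integral_of_le zero_le_one, integral_Ioc_eq_integral_Ioo]

lemma intval (γ : ℝ) (hγ1 : 1 < γ) (hγ2 : γ < 2) (n : ℕ) (hn : 1 ≤ n) :
    ∫ x in Ioi (0:ℝ), x ^ (-(γ/2)) * (x + n) ^ (-(γ/2))
      = (n:ℝ) ^ (-(γ-1)) * realBeta (1 - γ/2) (γ - 1) := by
  have hnpos : (0:ℝ) < n := by exact_mod_cast hn
  set f : ℝ → ℝ := fun u => (n:ℝ) * u / (1 - u) with hf
  have hderiv : ∀ u ∈ Ioo (0:ℝ) 1, HasDerivWithinAt f ((n:ℝ)/(1-u)^2) (Ioo (0:ℝ) 1) u := by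
    intro u hu
    have hu1 : (0:ℝ) < 1 - u := by linarith [hu.2]
    have h1 : HasDerivAt (fun u : ℝ => (n:ℝ) * u) (n:ℝ) u := by
      simpa using (hasDerivAt_id u).const_mul (n:ℝ)
    have h2 : HasDerivAt (fun u : ℝ => (1:ℝ) - u) (-1) u := by
      simpa using (hasDerivAt_id u).const_sub (1:ℝ)
    have h3 := h1.div h2 hu1.ne'
    have : ((n:ℝ) * (1 - u) - (n:ℝ) * u * (-1)) / (1 - u)^2 = (n:ℝ)/(1-u)^2 := by
      field_simp; ring
    rw [this] at h3
    exact h3.hasDerivWithinAt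
  have hinj : InjOn f (Ioo (0:ℝ) 1) := by
    apply StrictMonoOn.injOn
    intro u hu v hv huv
    have hu1 : (0:ℝ) < 1 - u := by linarith [hu.2]
    have hv1 : (0:ℝ) < 1 - v := by linarith [hv.2]
    rw [hf]
    simp only
    rw [div_lt_div_iff₀ hu1 hv1]
    nlinarith [hu.1, hv.1]
  have himg : f '' Ioo (0:ℝ) 1 = Ioi 0 := by
    ext x
    simp only [mem_image, mem_Ioi, mem_Ioo]
    constructor
    · rintro ⟨u, ⟨hu0, hu1⟩, rfl⟩
      have : (0:ℝ) < 1 - u := by linarith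
      positivity
    · intro hx
      refine ⟨x / (x + n), ⟨by positivity, ?_⟩, ?_⟩
      · rw [div_lt_one (by positivity)]; linarith
      · rw [hf]; field_simp; rw [add_sub_cancel_left, div_self hnpos.ne']
  have key := integral_image_eq_integral_abs_deriv_smul measurableSet_Ioo hderiv hinj
    (fun x => x ^ (-(γ/2)) * (x + n) ^ (-(γ/2)))
  rw [himg] at key
  rw [key]
  have hcong : ∀ u ∈ Ioo (0:ℝ) 1,
      |(n:ℝ)/(1-u)^2| • (f u ^ (-(γ/2)) * (f u + n) ^ (-(γ/2)))
        = (n:ℝ)^(-(γ-1)) * (u^((1-γ/2)-1) * (1-u)^((γ-1)-1)) := by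
    intro u hu
    have hu0 : (0:ℝ) < u := hu.1
    have hu1 : (0:ℝ) < 1 - u := by linarith [hu.2]
    have hfu : f u + (n:ℝ) = (n:ℝ) / (1 - u) := by rw [hf]; field_simp; ring
    have h1 : f u ^ (-(γ/2)) = (n:ℝ)^(-(γ/2)) * u^(-(γ/2)) * (1-u)^(γ/2) := by
      rw [hf]
      simp only
      rw [Real.div_rpow (by positivity) hu1.le, Real.mul_rpow hnpos.le hu0.le,
        div_eq_mul_inv, ← Real.rpow_neg hu1.le, neg_neg]
    have h2 : (f u + (n:ℝ)) ^ (-(γ/2)) = (n:ℝ)^(-(γ/2)) * (1-u)^(γ/2) := by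
      rw [hfu, Real.div_rpow hnpos.le hu1.le, div_eq_mul_inv, ← Real.rpow_neg hu1.le, neg_neg]
    have habs : |(n:ℝ)/(1-u)^2| = (n:ℝ)/(1-u)^2 := abs_of_pos (by positivity)
    rw [habs, smul_eq_mul, h1, h2]
    have hN : (n:ℝ)^(-(γ-1)) = (n:ℝ) * ((n:ℝ)^(-(γ/2)) * (n:ℝ)^(-(γ/2))) := by
      rw [← Real.rpow_add hnpos, show (-(γ/2) + -(γ/2) : ℝ) = -γ from by ring,
        show (-(γ-1) : ℝ) = 1 + -γ from by ring, Real.rpow_add hnpos, Real.rpow_one]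
    have hU : u ^ ((1-γ/2)-1) = u ^ (-(γ/2)) := by ring_nf
    have hV : (1-u) ^ ((γ-1)-1) = (1-u)^(γ/2) * (1-u)^(γ/2) / (1-u)^(2:ℝ) := by
      rw [← Real.rpow_add hu1, ← Real.rpow_sub hu1]
      norm_num
      ring_nf
    have hW : ((1-u):ℝ)^(2:ℕ) = (1-u)^((2:ℕ):ℝ) := (Real.rpow_natCast _ 2).symm
    rw [hN, hU, hV, hW]
    push_cast
    have hpow : ((1-u):ℝ)^(2:ℝ) ≠ 0 := by positivity
    field_simp
  rw [setIntegral_congr_fun measurableSet_Ioo hcong, integral_const_mul,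
    beta_Ioo (1-γ/2) (γ-1) (by linarith) (by linarith)]

lemma gInt (γ : ℝ) (hγ1 : 1 < γ) (hγ2 : γ < 2) (n : ℕ) (hn : 1 ≤ n) :
    IntegrableOn (fun x : ℝ => x ^ (-(γ/2)) * (x + n) ^ (-(γ/2))) (Ioi (0:ℝ)) := by
  have hmeas : Measurable (fun x : ℝ => x ^ (-(γ/2)) * (x + n) ^ (-(γ/2))) := by
    measurability
  have hne : (-(γ/2) : ℝ) ≤ 0 := by linarith
  rw [← Ioc_union_Ioi_eq_Ioi (zero_le_one (α := ℝ))]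
  apply IntegrableOn.union
  · have h1 : IntegrableOn (fun x : ℝ => x ^ (-(γ/2))) (Ioc (0:ℝ) 1) :=
      (intervalIntegrable_iff_integrableOn_Ioc_of_le zero_le_one).mp
        (intervalIntegral.intervalIntegrable_rpow' (by linarith))
    refine MeasureTheory.Integrable.mono h1 hmeas.aestronglyMeasurable.restrict ?_
    rw [ae_restrict_iff' measurableSet_Ioc]
    filter_upwards with x hx
    have hx0 : (0:ℝ) < x := hx.1
    have hxn : (1:ℝ) ≤ x + n := by
      have : (1:ℝ) ≤ (n:ℝ) := by exact_mod_cast hn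
      linarith
    rw [Real.norm_eq_abs, Real.norm_eq_abs, abs_of_nonneg (by positivity),
      abs_of_nonneg (by positivity)]
    calc x ^ (-(γ/2)) * (x + n) ^ (-(γ/2)) ≤ x ^ (-(γ/2)) * 1 :=
          mul_le_mul_of_nonneg_left (Real.rpow_le_one_of_one_le_of_nonpos hxn hne)
            (Real.rpow_nonneg hx0.le _)
      _ = x ^ (-(γ/2)) := mul_one _
  · have h2 : IntegrableOn (fun x : ℝ => x ^ (-γ)) (Ioi (1:ℝ)) :=
      integrableOn_Ioi_rpow_of_lt (by linarith) one_pos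
    refine MeasureTheory.Integrable.mono h2 hmeas.aestronglyMeasurable.restrict ?_
    rw [ae_restrict_iff' measurableSet_Ioi]
    filter_upwards with x hx
    have hx0 : (0:ℝ) < x := lt_trans one_pos hx
    rw [Real.norm_eq_abs, Real.norm_eq_abs, abs_of_nonneg (by positivity),
      abs_of_nonneg (by positivity)]
    calc x ^ (-(γ/2)) * (x + n) ^ (-(γ/2)) ≤ x ^ (-(γ/2)) * x ^ (-(γ/2)) :=
          mul_le_mul_of_nonneg_left
            (Real.rpow_le_rpow_of_nonpos hx0 (le_add_of_nonneg_right (Nat.cast_nonneg n)) hne)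
            (Real.rpow_nonneg hx0.le _)
      _ = x ^ (-γ) := by
          rw [← Real.rpow_add hx0, show (-(γ/2) + -(γ/2) : ℝ) = -γ from by ring]

lemma sum_le_int (γ : ℝ) (hγ1 : 1 < γ) (hγ2 : γ < 2) (n : ℕ) (hn : 1 ≤ n) :
    ∑' l : ℕ, (((l:ℝ)+1) ^ (-(γ/2)) * (((l:ℝ)+1) + n) ^ (-(γ/2)))
      ≤ ∫ x in Ioi (0:ℝ), x ^ (-(γ/2)) * (x + n) ^ (-(γ/2)) := by
  set g : ℝ → ℝ := fun x => x ^ (-(γ/2)) * (x + n) ^ (-(γ/2)) with hg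
  have hInt := gInt γ hγ1 hγ2 n hn
  have hne : (-(γ/2) : ℝ) ≤ 0 := by linarith
  have hcover : (⋃ l : ℕ, Ioc ((l:ℝ)) (l+1)) = Ioi (0:ℝ) := by
    ext x
    simp only [mem_iUnion, mem_Ioc, mem_Ioi]
    constructor
    · rintro ⟨l, hl, -⟩
      exact lt_of_le_of_lt (Nat.cast_nonneg l) hl
    · intro hx
      refine ⟨⌈x⌉₊ - 1, ?_, ?_⟩
      · have h1 : 1 ≤ ⌈x⌉₊ := Nat.one_le_ceil_iff.mpr hx
        have h2 : (⌈x⌉₊ : ℝ) < x + 1 := Nat.ceil_lt_add_one hx.le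
        push_cast [Nat.cast_sub h1]
        linarith
      · have h1 : 1 ≤ ⌈x⌉₊ := Nat.one_le_ceil_iff.mpr hx
        have h3 : x ≤ (⌈x⌉₊ : ℝ) := Nat.le_ceil x
        push_cast [Nat.cast_sub h1]
        linarith
  have hdisj : Pairwise (Function.onFun Disjoint (fun l : ℕ => Ioc ((l:ℝ)) (l+1))) := by
    intro l m hlm
    rw [Function.onFun, Set.Ioc_disjoint_Ioc]
    rcases hlm.lt_or_gt with h | h
    · have : (l:ℝ) + 1 ≤ m := by exact_mod_cast Nat.succ_le_of_lt h
      exact le_trans (min_le_left _ _) (le_trans this (le_max_right _ _))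
    · have : (m:ℝ) + 1 ≤ l := by exact_mod_cast Nat.succ_le_of_lt h
      exact le_trans (min_le_right _ _) (le_trans this (le_max_left _ _))
  have hS : HasSum (fun l : ℕ => ∫ x in Ioc ((l:ℝ)) (l+1), g x) (∫ x in Ioi (0:ℝ), g x) := by
    have := hasSum_integral_iUnion (f := g) (μ := volume)
      (fun l : ℕ => measurableSet_Ioc) hdisj (hcover ▸ hInt)
    rwa [hcover] at this
  have hterm : ∀ l : ℕ, g ((l:ℝ)+1) ≤ ∫ x in Ioc ((l:ℝ)) (l+1), g x := by
    intro l
    have hsub : Ioc ((l:ℝ)) (l+1) ⊆ Ioi (0:ℝ) := fun x hx =>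
      lt_of_le_of_lt (Nat.cast_nonneg l) hx.1
    have hint : IntegrableOn g (Ioc ((l:ℝ)) (l+1)) := hInt.mono_set hsub
    have hconst : ∫ (_ : ℝ) in Ioc ((l:ℝ)) (l+1), g ((l:ℝ)+1) = g ((l:ℝ)+1) := by
      rw [setIntegral_const, Real.volume_real_Ioc]
      simp
    rw [← hconst]
    apply setIntegral_mono_on ((integrableOn_const_iff enorm_ne_top).mpr (Or.inr (by
      rw [Real.volume_Ioc]; exact ENNReal.ofReal_lt_top))) hint measurableSet_Ioc
    intro x hx
    have hx0 : (0:ℝ) < x := lt_of_le_of_lt (Nat.cast_nonneg l) hx.1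
    exact mul_le_mul (Real.rpow_le_rpow_of_nonpos hx0 hx.2 hne)
      (Real.rpow_le_rpow_of_nonpos (by positivity) (by linarith [hx.2]) hne)
      (Real.rpow_nonneg (by positivity) _) (Real.rpow_nonneg (by positivity) _)
  have hsummable : Summable (fun l : ℕ => g ((l:ℝ)+1)) :=
    Summable.of_nonneg_of_le
      (fun l => mul_nonneg (Real.rpow_nonneg (by positivity) _) (Real.rpow_nonneg (by positivity) _))
      hterm hS.summable
  calc ∑' l : ℕ, (((l:ℝ)+1) ^ (-(γ/2)) * (((l:ℝ)+1) + n) ^ (-(γ/2)))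
      = ∑' l : ℕ, g ((l:ℝ)+1) := rfl
    _ ≤ ∑' l : ℕ, ∫ x in Ioc ((l:ℝ)) (l+1), g x := Summable.tsum_le_tsum hterm hsummable hS.summable
    _ = ∫ x in Ioi (0:ℝ), g x := hS.tsum_eq

/-- For `1 < γ < 2`, `λ_0 > 0`, `p ∈ [1,2)` and `λ_n = λ_0/(n+1)^{γ/p}`, for all `n ≥ 1`:
`∑_{l} (λ_l λ_{l+n})^{p/2} ≤ λ_0^p B(1−γ/2, γ−1) n^{−(γ−1)}`. -/
theorem stmt_6 (γ p lam0 : ℝ) (hγ1 : 1 < γ) (hγ2 : γ < 2) (hlam0 : 0 < lam0)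
    (hp1 : 1 ≤ p) (hp2 : p < 2) (lam : ℕ → ℝ)
    (hlam : ∀ n : ℕ, lam n = lam0 / ((n : ℝ) + 1) ^ (γ / p))
    (n : ℕ) (hn : 1 ≤ n) :
    ∑' l : ℕ, (lam l * lam (l + n)) ^ (p / 2) ≤
      lam0 ^ p * realBeta (1 - γ / 2) (γ - 1) * (n : ℝ) ^ (-(γ - 1)) := by
  have hp0 : (0:ℝ) < p := lt_of_lt_of_le one_pos hp1
  have htermEq : ∀ l : ℕ, (lam l * lam (l + n)) ^ (p / 2)
      = lam0 ^ p * (((l:ℝ)+1) ^ (-(γ/2)) * (((l:ℝ)+1) + n) ^ (-(γ/2))) := by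
    intro l
    have hA : (0:ℝ) < (l:ℝ)+1 := by positivity
    have hB : (0:ℝ) < (l:ℝ)+1+(n:ℝ) := by positivity
    have hBB : ((l+n:ℕ):ℝ)+1 = (l:ℝ)+1+(n:ℝ) := by push_cast; ring
    rw [hlam l, hlam (l+n), hBB, div_mul_div_comm,
      Real.div_rpow (by positivity) (by positivity),
      Real.mul_rpow hlam0.le hlam0.le,
      Real.mul_rpow (Real.rpow_nonneg hA.le _) (Real.rpow_nonneg hB.le _),
      ← Real.rpow_add hlam0, show p/2+p/2 = p from by ring,
      ← Real.rpow_mul hA.le, ← Real.rpow_mul hB.le,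
      show γ/p*(p/2) = γ/2 from by field_simp,
      Real.rpow_neg hA.le, Real.rpow_neg hB.le, div_eq_mul_inv, mul_inv]
  calc ∑' l : ℕ, (lam l * lam (l + n)) ^ (p / 2)
      = ∑' l : ℕ, lam0 ^ p * (((l:ℝ)+1) ^ (-(γ/2)) * (((l:ℝ)+1) + n) ^ (-(γ/2))) :=
        tsum_congr htermEq
    _ = lam0 ^ p * ∑' l : ℕ, (((l:ℝ)+1) ^ (-(γ/2)) * (((l:ℝ)+1) + n) ^ (-(γ/2))) :=
        tsum_mul_left
    _ ≤ lam0 ^ p * ((n:ℝ) ^ (-(γ-1)) * realBeta (1 - γ/2) (γ - 1)) := by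
        apply mul_le_mul_of_nonneg_left _ (Real.rpow_nonneg hlam0.le _)
        rw [← intval γ hγ1 hγ2 n hn]
        exact sum_le_int γ hγ1 hγ2 n hn
    _ = lam0 ^ p * realBeta (1 - γ / 2) (γ - 1) * (n : ℝ) ^ (-(γ - 1)) := by ring
end

section
/- Let γ ≥ 2, λ_0 > 0, p ∈ [1,2), and set λ_n = λ_0/(n+1)^{γ/p}. Then for every ε ∈ (0,1) and n ≥ 1, ∑_{l=0}^∞ (λ_l λ_{l+n})^{p/2} ≤ λ_0^p · B(ε/2, 1 − ε) · n^{−(1−ε)}. -/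
open Filter Topology

private lemma tele_hasSum (c : ℝ) (hc : 0 < c) :
    HasSum (fun l : ℕ => 1/(((l:ℝ)+c)*((l:ℝ)+c+1))) (1/c) := by
  have hg : ∀ l : ℕ, (1:ℝ)/((l:ℝ)+c) - 1/(((l+1 : ℕ):ℝ)+c) = 1/(((l:ℝ)+c)*((l:ℝ)+c+1)) := by
    intro l
    have h1 : (0:ℝ) < (l:ℝ)+c := by positivity
    have h2 : (0:ℝ) < (l:ℝ)+c+1 := by positivity
    push_cast
    rw [div_sub_div _ _ h1.ne' (by linarith : ((l:ℝ)+1+c) ≠ 0)]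
    rw [div_eq_div_iff (by positivity) (by positivity)]
    ring
  have hnn : ∀ l : ℕ, (0:ℝ) ≤ 1/(((l:ℝ)+c)*((l:ℝ)+c+1)) := by
    intro l; positivity
  rw [hasSum_iff_tendsto_nat_of_nonneg hnn]
  have hsum : ∀ N : ℕ, ∑ i ∈ Finset.range N, 1/(((i:ℝ)+c)*((i:ℝ)+c+1))
      = 1/c - 1/((N:ℝ)+c) := by
    intro N
    calc ∑ i ∈ Finset.range N, 1/(((i:ℝ)+c)*((i:ℝ)+c+1))
        = ∑ i ∈ Finset.range N, ((1:ℝ)/((i:ℝ)+c) - 1/(((i+1:ℕ):ℝ)+c)) :=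
          Finset.sum_congr rfl (fun i _ => (hg i).symm)
      _ = 1/(((0:ℕ):ℝ)+c) - 1/((N:ℝ)+c) := Finset.sum_range_sub' (fun l : ℕ => 1/((l:ℝ)+c)) N
      _ = 1/c - 1/((N:ℝ)+c) := by norm_num
  simp_rw [hsum]
  have : Tendsto (fun N : ℕ => 1/((N:ℝ)+c)) atTop (𝓝 0) := by
    simp_rw [one_div]
    exact (tendsto_atTop_add_const_right _ c tendsto_natCast_atTop_atTop).inv_tendsto_atTop
  simpa using (tendsto_const_nhds (x := 1/c)).sub this

private lemma gamma_mid_sq_le {a b : ℝ} (ha : 0 < a) (hb : 0 < b) :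
    Real.Gamma ((a+b)/2) ^ 2 ≤ Real.Gamma a * Real.Gamma b := by
  have h := Real.convexOn_log_Gamma.2 (Set.mem_Ioi.mpr ha) (Set.mem_Ioi.mpr hb)
    (by norm_num : (0:ℝ) ≤ 1/2) (by norm_num : (0:ℝ) ≤ 1/2) (by norm_num)
  simp only [Function.comp, smul_eq_mul] at h
  have hm : (1/2 : ℝ) * a + (1/2 : ℝ) * b = (a+b)/2 := by ring
  rw [hm] at h
  have hGa := Real.Gamma_pos_of_pos ha
  have hGb := Real.Gamma_pos_of_pos hb
  have hGm := Real.Gamma_pos_of_pos (by positivity : (0:ℝ) < (a+b)/2)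
  have := Real.exp_le_exp.mpr h
  rw [Real.exp_log hGm] at this
  calc Real.Gamma ((a+b)/2) ^ 2
      ≤ Real.exp (1/2 * Real.log (Real.Gamma a) + 1/2 * Real.log (Real.Gamma b)) ^ 2 := by
        exact pow_le_pow_left₀ hGm.le this 2
    _ = Real.Gamma a * Real.Gamma b := by
        rw [← Real.exp_nat_mul]
        have : (2:ℕ) * (1/2 * Real.log (Real.Gamma a) + 1/2 * Real.log (Real.Gamma b))
            = Real.log (Real.Gamma a) + Real.log (Real.Gamma b) := by push_cast; ring
        rw [this, Real.exp_add, Real.exp_log hGa, Real.exp_log hGb]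

private lemma beta_lower {ε : ℝ} (h0 : 0 < ε) (h1 : ε < 1) :
    2/ε ≤ realBeta (ε/2) (1-ε) := by
  have hs : ε/2 + (1-ε) = 1 - ε/2 := by ring
  have hG2 : Real.Gamma (ε/2) * Real.Gamma (1 - ε/2) = Real.pi / Real.sin (Real.pi * (ε/2)) :=
    Real.Gamma_mul_Gamma_one_sub (ε/2)
  have hsin_pos : 0 < Real.sin (Real.pi * (ε/2)) := by
    apply Real.sin_pos_of_pos_of_lt_pi
    · positivity
    · nlinarith [Real.pi_pos]
  have hsin_le : Real.sin (Real.pi * (ε/2)) ≤ Real.pi * (ε/2) :=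
    Real.sin_le (by positivity)
  have hGm := Real.Gamma_pos_of_pos (by linarith : (0:ℝ) < 1 - ε/2)
  have hGe := Real.Gamma_pos_of_pos (by linarith : (0:ℝ) < 1 - ε)
  have hGh := Real.Gamma_pos_of_pos (by positivity : (0:ℝ) < ε/2)
  have hmid : Real.Gamma (1 - ε/2) ^ 2 ≤ Real.Gamma (1-ε) := by
    have := gamma_mid_sq_le (by linarith : (0:ℝ) < 1-ε) one_pos
    rw [Real.Gamma_one, mul_one] at this
    have hm : ((1-ε)+1)/2 = 1 - ε/2 := by ring
    rwa [hm] at this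
  rw [realBeta, hs, div_le_div_iff₀ h0 hGm]
  have hπ : Real.Gamma (ε/2) * Real.Gamma (1 - ε/2) * Real.sin (Real.pi * (ε/2)) = Real.pi := by
    rw [hG2, div_mul_cancel₀ _ hsin_pos.ne']
  have hkey : 2 * Real.sin (Real.pi * (ε/2)) * Real.Gamma (1 - ε/2)^2
      ≤ Real.pi * ε * Real.Gamma (1-ε) := by
    calc 2 * Real.sin (Real.pi * (ε/2)) * Real.Gamma (1 - ε/2)^2
        ≤ 2 * (Real.pi * (ε/2)) * Real.Gamma (1 - ε/2)^2 := by nlinarith [sq_nonneg (Real.Gamma (1 - ε/2))]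
      _ = Real.pi * ε * Real.Gamma (1 - ε/2)^2 := by ring
      _ ≤ Real.pi * ε * Real.Gamma (1-ε) := by
          have : (0:ℝ) < Real.pi * ε := by positivity
          nlinarith
  have hpos : 0 < Real.sin (Real.pi * (ε/2)) * Real.Gamma (1 - ε/2) := mul_pos hsin_pos hGm
  rw [← mul_le_mul_iff_of_pos_right hpos]
  calc 2 * Real.Gamma (1 - ε/2) * (Real.sin (Real.pi * (ε/2)) * Real.Gamma (1 - ε/2))
      = 2 * Real.sin (Real.pi * (ε/2)) * Real.Gamma (1 - ε/2)^2 := by ring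
    _ ≤ Real.pi * ε * Real.Gamma (1-ε) := hkey
    _ = Real.Gamma (ε/2) * Real.Gamma (1-ε) * ε * (Real.sin (Real.pi * (ε/2)) * Real.Gamma (1 - ε/2)) := by
        linear_combination (-(ε * Real.Gamma (1-ε))) * hπ

/-- For `γ ≥ 2`, `λ_0 > 0`, `p ∈ [1,2)` and `λ_n = λ_0/(n+1)^{γ/p}`, for every
`ε ∈ (0,1)` and `n ≥ 1`: `∑_{l} (λ_l λ_{l+n})^{p/2} ≤ λ_0^p B(ε/2, 1−ε) n^{−(1−ε)}`. -/
theorem stmt_7 (γ p lam0 : ℝ) (hγ : 2 ≤ γ) (hlam0 : 0 < lam0)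
    (hp1 : 1 ≤ p) (hp2 : p < 2) (lam : ℕ → ℝ)
    (hlam : ∀ n : ℕ, lam n = lam0 / ((n : ℝ) + 1) ^ (γ / p))
    (ε : ℝ) (hε : ε ∈ Set.Ioo (0 : ℝ) 1) (n : ℕ) (hn : 1 ≤ n) :
    ∑' l : ℕ, (lam l * lam (l + n)) ^ (p / 2) ≤
      lam0 ^ p * realBeta (ε / 2) (1 - ε) * (n : ℝ) ^ (-(1 - ε)) := by
  obtain ⟨hε0, hε1⟩ := hε
  have hp0 : (0:ℝ) < p := lt_of_lt_of_le one_pos hp1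
  have hn1 : (1:ℝ) ≤ (n:ℝ) := by exact_mod_cast hn
  have hnpos : (0:ℝ) < (n:ℝ) := lt_of_lt_of_le one_pos hn1
  set f : ℕ → ℝ := fun l => 1/(((l:ℝ)+1)*((l:ℝ)+(n:ℝ)+1)) with hf_def
  have hf_nonneg : ∀ l, 0 ≤ f l := fun l => by positivity
  -- termwise bound
  have hterm : ∀ l : ℕ, (lam l * lam (l + n)) ^ (p / 2) ≤ lam0 ^ p * f l := by
    intro l
    set A : ℝ := (l:ℝ) + 1 with hA
    set B : ℝ := (l:ℝ) + (n:ℝ) + 1 with hB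
    have hl0 : (0:ℝ) ≤ (l:ℝ) := Nat.cast_nonneg l
    have hn0 : (0:ℝ) ≤ (n:ℝ) := Nat.cast_nonneg n
    have hA1 : (1:ℝ) ≤ A := by rw [hA]; linarith
    have hB1 : (1:ℝ) ≤ B := by rw [hB]; linarith
    have hA0 : (0:ℝ) < A := lt_of_lt_of_le one_pos hA1
    have hB0 : (0:ℝ) < B := lt_of_lt_of_le one_pos hB1
    have h1 : lam l * lam (l + n) = (lam0 * lam0) / (A ^ (γ/p) * B ^ (γ/p)) := by
      rw [hlam, hlam, div_mul_div_comm]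
      push_cast
      rw [hA, hB]
    have hexp : γ/p * (p/2) = γ/2 := by field_simp
    have h2 : (lam l * lam (l + n)) ^ (p/2) = lam0 ^ p / (A ^ (γ/2) * B ^ (γ/2)) := by
      rw [h1, Real.div_rpow (by positivity) (by positivity),
        Real.mul_rpow (by positivity) (by positivity),
        ← Real.rpow_add hlam0,
        Real.mul_rpow (by positivity) (by positivity),
        ← Real.rpow_mul hA0.le, ← Real.rpow_mul hB0.le, hexp]
      norm_num
    have := hf_def
    rw [h2]
    show lam0 ^ p / (A ^ (γ/2) * B ^ (γ/2)) ≤ lam0 ^ p * (1/(A*B))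
    rw [mul_one_div]
    have hA2 : A ≤ A ^ (γ/2) := by
      nth_rewrite 1 [← Real.rpow_one A]
      exact Real.rpow_le_rpow_of_exponent_le hA1 (by linarith)
    have hB2 : B ≤ B ^ (γ/2) := by
      nth_rewrite 1 [← Real.rpow_one B]
      exact Real.rpow_le_rpow_of_exponent_le hB1 (by linarith)
    gcongr
  -- summability of `f`
  have hmaj2 : Summable (fun l : ℕ => 1/(((l:ℝ)+1)^2)) := by
    have h2 : Summable (fun l : ℕ => 1/((l:ℝ))^2) :=
      Real.summable_one_div_nat_pow.mpr one_lt_two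
    have := (summable_nat_add_iff 1).mpr h2
    simpa using this
  have hf_sum : Summable f := by
    apply Summable.of_nonneg_of_le hf_nonneg _ hmaj2
    intro l
    rw [hf_def]
    have h1 : (0:ℝ) < (l:ℝ)+1 := by positivity
    apply div_le_div_of_nonneg_left one_pos.le (by positivity)
    have hsq : ((l:ℝ)+1)^2 = ((l:ℝ)+1)*((l:ℝ)+1) := sq ((l:ℝ)+1)
    rw [hsq]
    have hn0 : (0:ℝ) ≤ (n:ℝ) := Nat.cast_nonneg n
    nlinarith
  -- sum of LHS bounded by lam0^p * ∑' f
  have hmaj_sum : Summable (fun l => lam0 ^ p * f l) := hf_sum.mul_left _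
  have hLHS_nonneg : ∀ l : ℕ, 0 ≤ (lam l * lam (l + n)) ^ (p / 2) := by
    intro l
    apply Real.rpow_nonneg
    have h1 : 0 ≤ lam l := by rw [hlam]; positivity
    have h2 : 0 ≤ lam (l + n) := by rw [hlam]; positivity
    exact mul_nonneg h1 h2
  have hLHS_sum : Summable (fun l : ℕ => (lam l * lam (l + n)) ^ (p / 2)) :=
    Summable.of_nonneg_of_le hLHS_nonneg hterm hmaj_sum
  have hstep1 : ∑' l : ℕ, (lam l * lam (l + n)) ^ (p / 2) ≤ lam0 ^ p * ∑' l, f l := by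
    rw [← tsum_mul_left]
    exact Summable.tsum_le_tsum hterm hLHS_sum hmaj_sum
  -- bound ∑' f
  have hS : ∑' l, f l ≤ (2 + Real.log n) / n := by
    rw [← Summable.sum_add_tsum_nat_add n hf_sum]
    have hhead : ∑ l ∈ Finset.range n, f l ≤ (1 + Real.log n) / n := by
      have h1 : ∀ l ∈ Finset.range n, f l ≤ 1/((l:ℝ)+1) * (1/(n:ℝ)) := by
        intro l _
        rw [hf_def, one_div_mul_one_div]
        apply div_le_div_of_nonneg_left one_pos.le (by positivity)
        have hl0 : (0:ℝ) ≤ (l:ℝ) := Nat.cast_nonneg l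
        nlinarith
      calc ∑ l ∈ Finset.range n, f l ≤ ∑ l ∈ Finset.range n, 1/((l:ℝ)+1) * (1/(n:ℝ)) :=
            Finset.sum_le_sum h1
        _ = (∑ l ∈ Finset.range n, 1/((l:ℝ)+1)) * (1/(n:ℝ)) := by
            rw [Finset.sum_mul]
        _ ≤ (1 + Real.log n) * (1/(n:ℝ)) := by
            apply mul_le_mul_of_nonneg_right _ (by positivity)
            have := harmonic_le_one_add_log n
            rw [harmonic] at this
            push_cast at this
            simpa [one_div] using this
        _ = (1 + Real.log n) / n := by rw [mul_one_div]
    have htail : ∑' l : ℕ, f (l + n) ≤ 1 / (n:ℝ) := by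
      have hc : (0:ℝ) < (n:ℝ) + 1 := by positivity
      have hts := tele_hasSum ((n:ℝ)+1) hc
      have hle : ∀ l : ℕ, f (l + n) ≤ 1/(((l:ℝ)+((n:ℝ)+1))*((l:ℝ)+((n:ℝ)+1)+1)) := by
        intro l
        rw [hf_def]
        push_cast
        apply div_le_div_of_nonneg_left one_pos.le (by positivity)
        have hl0 : (0:ℝ) ≤ (l:ℝ) := Nat.cast_nonneg l
        nlinarith
      calc ∑' l : ℕ, f (l + n) ≤ ∑' l : ℕ, 1/(((l:ℝ)+((n:ℝ)+1))*((l:ℝ)+((n:ℝ)+1)+1)) := by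
            apply Summable.tsum_le_tsum hle ((summable_nat_add_iff n).mpr hf_sum) hts.summable
        _ = 1/((n:ℝ)+1) := hts.tsum_eq
        _ ≤ 1/(n:ℝ) := by
            apply div_le_div_of_nonneg_left one_pos.le hnpos
            linarith
    calc ∑ l ∈ Finset.range n, f l + ∑' l : ℕ, f (l + n)
        ≤ (1 + Real.log n) / n + 1/(n:ℝ) := add_le_add hhead htail
      _ = (2 + Real.log n) / n := by rw [← add_div]; ring_nf
  -- Beta bound
  have hB : 2/ε ≤ realBeta (ε/2) (1-ε) := beta_lower hε0 hε1
  have hBpos : 0 < realBeta (ε/2) (1-ε) := lt_of_lt_of_le (by positivity) hB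
  have hlog0 : 0 ≤ Real.log n := Real.log_nonneg hn1
  have hrpow : (n:ℝ) ^ (-(1-ε)) = (n:ℝ)^ε / (n:ℝ) := by
    rw [show -(1-ε) = ε - 1 by ring, Real.rpow_sub hnpos, Real.rpow_one]
  have hnε : 1 + ε * Real.log n ≤ (n:ℝ)^ε := by
    rw [Real.rpow_def_of_pos hnpos]
    have := Real.add_one_le_exp (Real.log n * ε)
    linarith [this]
  have hfinal : (2 + Real.log n) / n ≤ realBeta (ε/2) (1-ε) * (n:ℝ) ^ (-(1-ε)) := by
    rw [hrpow, ← mul_div_assoc]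
    gcongr
    calc 2 + Real.log n ≤ 2/ε + 2 * Real.log n := by
          have h2e : 2 ≤ 2/ε := by
            rw [le_div_iff₀ hε0]; nlinarith
          linarith
      _ = 2/ε * (1 + ε * Real.log n) := by field_simp
      _ ≤ realBeta (ε/2) (1-ε) * (n:ℝ)^ε := by
          apply mul_le_mul hB hnε (by nlinarith) hBpos.le
  calc ∑' l : ℕ, (lam l * lam (l + n)) ^ (p / 2)
      ≤ lam0 ^ p * ∑' l, f l := hstep1
    _ ≤ lam0 ^ p * ((2 + Real.log n) / n) := by
        apply mul_le_mul_of_nonneg_left hS (Real.rpow_nonneg hlam0.le p)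
    _ ≤ lam0 ^ p * (realBeta (ε/2) (1-ε) * (n:ℝ) ^ (-(1-ε))) := by
        apply mul_le_mul_of_nonneg_left hfinal (Real.rpow_nonneg hlam0.le p)
    _ = lam0 ^ p * realBeta (ε / 2) (1 - ε) * (n : ℝ) ^ (-(1 - ε)) := by ring
end
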